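/- For every graph G with n vertices, the sparse twin-width, maximum degree, and twin-width satisfy max{tww(G), Δ(G)} ≤ stww(G) ≤ tww(G) + Δ(G). -/

import Mathlib

noncomputable section

namespace TwwPaper

open Finset

variable {V : Type*}

/-- The number of edges of `G` with both endpoints in `X`. -/
def edgesIn (G : SimpleGraph V) (X : Finset V) : ℕ :=
  Nat.card {e : Sym2 V // e ∈ G.edgeSet ∧ ∀ v ∈ e, v ∈ X}

/-- The number of edges of `G`. -/
def edgeCount (G : SimpleGraph V) : ℕ := Nat.card G.edgeSet

/-- The maximum average degree of `G`: the maximum over nonempty vertex subsets `X`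
of `2 e(G[X]) / |X|`. -/
def mad [Fintype V] (G : SimpleGraph V) : ℝ :=
  ⨆ X : {X : Finset V // X.Nonempty}, (2 * edgesIn G X.1 : ℝ) / X.1.card

/-- The degree of a vertex. -/
def deg (G : SimpleGraph V) (v : V) : ℕ := Nat.card (G.neighborSet v)

/-- The maximum degree `Δ(G)`. -/
def maxDeg [Fintype V] (G : SimpleGraph V) : ℕ := univ.sup (deg G)

/-- `G` is `d`-regular. -/
def IsReg (G : SimpleGraph V) (d : ℕ) : Prop := ∀ v, deg G v = d

/-- `G` admits an orientation with maximum outdegree at most one: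
an assignment of a tail (source) vertex to each edge, no vertex being
the tail of two distinct edges. -/
def HasOrientationOutdegLEOne (G : SimpleGraph V) : Prop :=
  ∃ f : G.edgeSet → V, (∀ e : G.edgeSet, f e ∈ (e : Sym2 V)) ∧ Function.Injective f

/-- Two lists (sequences) of the same length `r` are close if they contain a common
subsequence of length `r - 1`, obtained by deleting one entry from each. -/
def Close {S : Type*} (L M : List S) : Prop :=
  ∃ i < L.length, ∃ j < M.length, L.eraseIdx i = M.eraseIdx j

section Partitions

variable [Fintype V] [DecidableEq V]

/-- `Q` is obtained from `P` by merging the two distinct parts `A` and `B`. -/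
def IsMergeStep (P Q : Finpartition (univ : Finset V)) : Prop :=
  ∃ A ∈ P.parts, ∃ B ∈ P.parts, A ≠ B ∧
    Q.parts = insert (A ∪ B) ((P.parts.erase A).erase B)

/-- Degree of the part `A` in the quotient graph `G / P`. -/
def quotDeg (G : SimpleGraph V) (P : Finpartition (univ : Finset V)) (A : Finset V) : ℕ :=
  Nat.card {B : Finset V // B ∈ P.parts ∧ B ≠ A ∧ ∃ u ∈ A, ∃ v ∈ B, G.Adj u v}

/-- Red degree of the part `A` with respect to the partition `P`: the number of other
parts `B` which are neither fully adjacent nor fully non-adjacent to `A`. -/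
def redDeg (G : SimpleGraph V) (P : Finpartition (univ : Finset V)) (A : Finset V) : ℕ :=
  Nat.card {B : Finset V // B ∈ P.parts ∧ B ≠ A ∧ (∃ u ∈ A, ∃ v ∈ B, G.Adj u v) ∧
    ¬ (∀ u ∈ A, ∀ v ∈ B, G.Adj u v)}

/-- There is a sequence of partitions of `V(G)`, starting at the discrete partition,
ending with at most one part, each obtained from the previous one by merging two parts,
such that every part of every intermediate partition has `degFn`-degree at most `w`. -/
def SeqOK (G : SimpleGraph V)
    (degFn : SimpleGraph V → Finpartition (univ : Finset V) → Finset V → ℕ) (w : ℕ) : Prop :=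
  ∃ n : ℕ, ∃ P : Fin (n + 1) → Finpartition (univ : Finset V),
    (∀ A ∈ (P 0).parts, A.card = 1) ∧
    (P (Fin.last n)).parts.card ≤ 1 ∧
    (∀ i : Fin n, IsMergeStep (P i.castSucc) (P i.succ)) ∧
    (∀ i, ∀ A ∈ (P i).parts, degFn G (P i) A ≤ w)

/-- The sparse twin-width of `G`: the least `w` such that `G` can be contracted to a
single vertex by iterated pairwise identifications with all intermediate (quotient)
graphs of maximum degree at most `w`. -/
def stww (G : SimpleGraph V) : ℕ := sInf {w | SeqOK G quotDeg w}

/-- The twin-width of `G`, via contraction sequences minimizing the maximum red degree. -/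
def tww (G : SimpleGraph V) : ℕ := sInf {w | SeqOK G redDeg w}

/-- The quotient graph `G / P`: parts of `P` are adjacent iff some edge of `G` joins them. -/
def quotGraph (G : SimpleGraph V) (P : Finpartition (univ : Finset V)) :
    SimpleGraph {A : Finset V // A ∈ P.parts} :=
  SimpleGraph.fromRel (fun A B => ∃ u ∈ A.1, ∃ v ∈ B.1, G.Adj u v)

end Partitions

/-- A graph is `w`-degenerate if every nonempty (induced) subgraph has a vertex of
degree at most `w` in it. -/
def Degenerate {W : Type*} (w : ℕ) (H : SimpleGraph W) : Prop :=
  ∀ s : Finset W, s.Nonempty → ∃ a ∈ s, Nat.card {b : W // b ∈ s ∧ H.Adj a b} ≤ w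

/-- The graph `Π(r₁,…,r_a; b, q)`: vertices are tuples `(v₁,…,v_a)` with `vᵢ ∈ [q]^{rᵢ}`,
two tuples being adjacent iff (they are distinct and) at least `b` coordinates are
pairwise equal or close. -/
def PiGraph (a b q : ℕ) (rfn : Fin a → ℕ) : SimpleGraph (∀ i : Fin a, Fin (rfn i) → Fin q) :=
  SimpleGraph.fromRel (fun u v => ∃ I : Finset (Fin a), I.card = b ∧
    ∀ i ∈ I, u i = v i ∨ Close (List.ofFn (u i)) (List.ofFn (v i)))

/-!
Every part `B` adjacent to a part `A` in the quotient is either red towards `A` or fully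
joined to `A`; in the latter case `B` contains a neighbour of any fixed `u ∈ A`, and distinct
such parts contain distinct neighbours, so the quotient degree is at most the red degree plus
`Δ(G)`. Conversely the red degree never exceeds the quotient degree, and at the discrete
partition the quotient degree of `{v}` is at least `deg v`. Contraction sequences exist at all
because merging two parts at a time from the discrete partition terminates.
-/

section

variable {α : Type*} [DecidableEq α] {s A B : Finset α}

def _root_.Finpartition.mergeParts (P : Finpartition s) (hA : A ∈ P.parts) (hB : B ∈ P.parts)
    (hAB : A ≠ B) : Finpartition s where
  parts := insert (A ∪ B) ((P.parts.erase A).erase B)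
  supIndep := by
    rw [Finset.supIndep_iff_pairwiseDisjoint, coe_insert]
    refine (P.supIndep.pairwiseDisjoint.subset fun C hC => ?_).insert fun C hC _ => ?_
    · exact mem_of_mem_erase (mem_of_mem_erase hC)
    · obtain ⟨⟨hC, hCA⟩, hCB⟩ : (C ∈ P.parts ∧ C ≠ A) ∧ C ≠ B := by simpa using hC
      exact disjoint_union_left.2 ⟨P.disjoint hA hC hCA.symm, P.disjoint hB hC hCB.symm⟩
  sup_parts := by
    have hB' : B ∈ P.parts.erase A := mem_erase.2 ⟨hAB.symm, hB⟩
    calc (insert (A ∪ B) ((P.parts.erase A).erase B)).sup id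
        = A ⊔ (insert B ((P.parts.erase A).erase B)).sup id := by
          rw [sup_insert, sup_insert, id_eq, id_eq, ← sup_eq_union, sup_assoc]
      _ = (insert A (P.parts.erase A)).sup id := by rw [insert_erase hB', sup_insert]; rfl
      _ = s := by rw [insert_erase hA, P.sup_parts]
  bot_notMem h := by
    rcases mem_insert.1 h with h | h
    · exact (P.nonempty_of_mem_parts hA).ne_empty
        (subset_empty.1 (h ▸ subset_union_left : A ⊆ ⊥))
    · exact P.bot_notMem (mem_of_mem_erase (mem_of_mem_erase h))

lemma _root_.Finpartition.card_parts_mergeParts_lt (P : Finpartition s) (hA : A ∈ P.parts)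
    (hB : B ∈ P.parts) (hAB : A ≠ B) : #(P.mergeParts hA hB hAB).parts < #P.parts := by
  have hB' : B ∈ P.parts.erase A := mem_erase.2 ⟨hAB.symm, hB⟩
  calc #(insert (A ∪ B) ((P.parts.erase A).erase B))
      ≤ #((P.parts.erase A).erase B) + 1 := card_insert_le _ _
    _ < #P.parts := by
      rw [card_erase_of_mem hB', card_erase_of_mem hA]
      have := one_lt_card.2 ⟨A, hA, B, hB, hAB⟩
      omega

lemma _root_.Finpartition.singleton_mem_parts (P : Finpartition s)
    (hP : ∀ A ∈ P.parts, #A = 1) {x : α} (hx : x ∈ s) : {x} ∈ P.parts := by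
  obtain ⟨A, hA, hxA⟩ := P.exists_mem hx
  obtain ⟨y, rfl⟩ := card_eq_one.1 (hP A hA)
  rwa [mem_singleton.1 hxA]

end

section Contraction

variable {V : Type*} [Fintype V] [DecidableEq V]

lemma exists_mergeStep_chain (P : Finpartition (univ : Finset V)) :
    ∃ n, ∃ Q : ℕ → Finpartition (univ : Finset V), Q 0 = P ∧ #(Q n).parts ≤ 1 ∧
      ∀ i < n, IsMergeStep (Q i) (Q (i + 1)) := by
  induction hk : #P.parts using Nat.strong_induction_on generalizing P with
  | _ k ih =>
    by_cases h1 : #P.parts ≤ 1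
    · exact ⟨0, fun _ => P, rfl, h1, by omega⟩
    obtain ⟨A, hA, B, hB, hAB⟩ := one_lt_card.1 (not_le.1 h1)
    obtain ⟨n, Q, hQ0, hQn, hQ⟩ :=
      ih _ (hk ▸ P.card_parts_mergeParts_lt hA hB hAB) (P.mergeParts hA hB hAB) rfl
    refine ⟨n + 1, Nat.rec P fun j _ => Q j, rfl, hQn, fun i hi => ?_⟩
    cases i with
    | zero => exact ⟨A, hA, B, hB, hAB, by simp only [Nat.rec_zero, hQ0]; rfl⟩
    | succ j => exact hQ j (by omega)

lemma seqOK_of_forall_le (G : SimpleGraph V)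
    {degFn : SimpleGraph V → Finpartition (univ : Finset V) → Finset V → ℕ} {w : ℕ}
    (h : ∀ P A, degFn G P A ≤ w) : SeqOK G degFn w := by
  obtain ⟨n, Q, hQ0, hQn, hQ⟩ := exists_mergeStep_chain (⊥ : Finpartition (univ : Finset V))
  refine ⟨n, fun i => Q i, fun A hA => ?_, by simpa using hQn, fun i => hQ i i.isLt,
    fun _ _ _ => h _ _⟩
  replace hA : A ∈ (Q 0).parts := hA
  rw [hQ0] at hA
  obtain ⟨a, -, rfl⟩ := Finpartition.mem_bot_iff.1 hA
  exact card_singleton a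

lemma SeqOK.mono {G : SimpleGraph V}
    {f g : SimpleGraph V → Finpartition (univ : Finset V) → Finset V → ℕ} {w w' : ℕ}
    (hs : SeqOK G f w) (h : ∀ P, ∀ A ∈ P.parts, f G P A ≤ w → g G P A ≤ w') :
    SeqOK G g w' := by
  obtain ⟨n, P, h0, hn, hstep, hw⟩ := hs
  exact ⟨n, P, h0, hn, hstep, fun i A hA => h _ A hA (hw i A hA)⟩

section Degrees

variable (G : SimpleGraph V) (P : Finpartition (univ : Finset V)) {A : Finset V}

lemma quotDeg_le_card : quotDeg G P A ≤ Fintype.card V := by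
  calc quotDeg G P A ≤ Nat.card {B : Finset V // B ∈ P.parts} :=
        Nat.card_le_card_of_injective _ (Subtype.impEmbedding _ _ fun _ hB => hB.1).injective
    _ = #P.parts := by rw [Nat.card_eq_fintype_card, Fintype.card_coe]
    _ ≤ Fintype.card V := P.card_parts_le_card

lemma redDeg_le_quotDeg : redDeg G P A ≤ quotDeg G P A :=
  Nat.card_le_card_of_injective _
    (Subtype.impEmbedding _ _ fun _ hB => ⟨hB.1, hB.2.1, hB.2.2.1⟩).injective

lemma deg_le_quotDeg_singleton (hP : ∀ A ∈ P.parts, #A = 1) (v : V) :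
    deg G v ≤ quotDeg G P {v} :=
  Nat.card_le_card_of_injective
    (fun u => ⟨{u.1}, P.singleton_mem_parts hP (mem_univ _),
      fun h => G.ne_of_adj u.2 (singleton_injective h).symm, v, mem_singleton_self v, u.1,
      mem_singleton_self _, u.2⟩)
    fun _ _ h => Subtype.ext (singleton_injective (congrArg Subtype.val h))

lemma quotDeg_le_redDeg_add_deg {u : V} (hu : u ∈ A) :
    quotDeg G P A ≤ redDeg G P A + deg G u := by
  calc quotDeg G P A = Set.ncard {B | B ∈ P.parts ∧ B ≠ A ∧ ∃ x ∈ A, ∃ y ∈ B, G.Adj x y} := rfl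
    _ ≤ Set.ncard ({B | B ∈ P.parts ∧ B ≠ A ∧ (∃ x ∈ A, ∃ y ∈ B, G.Adj x y) ∧
          ¬ (∀ x ∈ A, ∀ y ∈ B, G.Adj x y)} ∪ P.part '' G.neighborSet u) := by
      refine Set.ncard_le_ncard fun B ⟨hB, hBA, hadj⟩ => ?_
      by_cases hfull : ∀ x ∈ A, ∀ y ∈ B, G.Adj x y
      · obtain ⟨v, hv⟩ := P.nonempty_of_mem_parts hB
        exact Or.inr ⟨v, hfull u hu v hv, P.part_eq_of_mem hB hv⟩
      · exact Or.inl ⟨hB, hBA, hadj, hfull⟩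
    _ ≤ redDeg G P A + Set.ncard (P.part '' G.neighborSet u) := Set.ncard_union_le _ _
    _ ≤ redDeg G P A + deg G u := by gcongr; exact Set.ncard_image_le

lemma quotDeg_le_redDeg_add_maxDeg (hA : A ∈ P.parts) :
    quotDeg G P A ≤ redDeg G P A + maxDeg G := by
  obtain ⟨u, hu⟩ := P.nonempty_of_mem_parts hA
  exact (quotDeg_le_redDeg_add_deg G P hu).trans (by gcongr; exact le_sup (mem_univ u))

end Degrees

lemma seqOK_quotDeg_card (G : SimpleGraph V) : SeqOK G quotDeg (Fintype.card V) :=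
  seqOK_of_forall_le G fun P _ => quotDeg_le_card G P

variable {G : SimpleGraph V} {w : ℕ}

lemma SeqOK.redDeg_of_quotDeg (hs : SeqOK G quotDeg w) : SeqOK G redDeg w :=
  hs.mono fun P _ _ hw => (redDeg_le_quotDeg G P).trans hw

lemma SeqOK.quotDeg_of_redDeg (hs : SeqOK G redDeg w) : SeqOK G quotDeg (w + maxDeg G) :=
  hs.mono fun P _ hA hw => (quotDeg_le_redDeg_add_maxDeg G P hA).trans (by omega)

lemma maxDeg_le_of_seqOK_quotDeg (hs : SeqOK G quotDeg w) : maxDeg G ≤ w := by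
  obtain ⟨n, P, h0, -, -, hw⟩ := hs
  exact Finset.sup_le fun v _ => (deg_le_quotDeg_singleton G (P 0) h0 v).trans
    (hw 0 _ ((P 0).singleton_mem_parts h0 (mem_univ v)))

end Contraction

theorem statement_9 {V : Type*} [Fintype V] [DecidableEq V] (G : SimpleGraph V) :
    max (tww G) (maxDeg G) ≤ stww G ∧ stww G ≤ tww G + maxDeg G := by
  have hstww : SeqOK G quotDeg (stww G) :=
    Nat.sInf_mem (s := {w | SeqOK G quotDeg w}) ⟨_, seqOK_quotDeg_card G⟩
  have htww : SeqOK G redDeg (tww G) :=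
    Nat.sInf_mem (s := {w | SeqOK G redDeg w}) ⟨_, (seqOK_quotDeg_card G).redDeg_of_quotDeg⟩
  exact ⟨max_le (Nat.sInf_le hstww.redDeg_of_quotDeg) (maxDeg_le_of_seqOK_quotDeg hstww),
    Nat.sInf_le htww.quotDeg_of_redDeg⟩

end TwwPaper
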